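/- Algebraic Carnap categoricity of CPC: Let A be an algebra with constants 0, 1 and binary operations ∧, ∨, → such that a ≤ b ⟺ a ∧ b = a is a partial order with greatest element 1, and suppose A is consistent with classical consequence ⊢_CPC in the sense that whenever ψ₁,…,ψₙ ⊢_CPC φ, for all valuations v and all c ∈ A, c ≤ ⟦ψᵢ⟧ᵥ for all i implies c ≤ ⟦φ⟧ᵥ. Then, defining a' = a → 0, the structure (A, 0, 1, ∧, ∨, ') is a Boolean algebra. -/

import Mathlib

/-- Formulas in the language with ⊥, ⊤, ∧, ∨, → over atoms ℕ. -/
inductive Form : Type where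
  | atom : ℕ → Form
  | bot  : Form
  | top  : Form
  | and  : Form → Form → Form
  | or   : Form → Form → Form
  | imp  : Form → Form → Form

/-- Classical (two-valued) evaluation of a formula. -/
def evalB (w : ℕ → Bool) : Form → Bool
  | Form.atom p => w p
  | Form.bot => false
  | Form.top => true
  | Form.and φ ψ => evalB w φ && evalB w ψ
  | Form.or φ ψ => evalB w φ || evalB w ψ
  | Form.imp φ ψ => !evalB w φ || evalB w ψ

/-- Classical propositional consequence (from a finite list of premises). -/
def CPC (L : List Form) (φ : Form) : Prop :=
  ∀ w : ℕ → Bool, (∀ ψ ∈ L, evalB w ψ = true) → evalB w φ = true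

/-- The unique homomorphic extension of a valuation v : atoms → A. -/
def evalA {A : Type*} (z o : A) (meet join himp : A → A → A) (v : ℕ → A) :
    Form → A
  | Form.atom p => v p
  | Form.bot => z
  | Form.top => o
  | Form.and φ ψ => meet (evalA z o meet join himp v φ) (evalA z o meet join himp v ψ)
  | Form.or φ ψ => join (evalA z o meet join himp v φ) (evalA z o meet join himp v ψ)
  | Form.imp φ ψ => himp (evalA z o meet join himp v φ) (evalA z o meet join himp v ψ)

/-!
Each Boolean-algebra axiom `s = t` is a classical equivalence `s ⊣⊢_CPC t`. Consistency, applied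
with `c = ⟦s⟧ᵥ` (so that `c ≤ ⟦s⟧ᵥ` is reflexivity), gives `⟦s⟧ᵥ ≤ ⟦t⟧ᵥ`, and symmetrically
`⟦t⟧ᵥ ≤ ⟦s⟧ᵥ`; antisymmetry then turns the equivalence into the identity `⟦s⟧ᵥ = ⟦t⟧ᵥ`.
-/

theorem CPC_singleton_of_evalB_eq {σ τ : Form} (h : ∀ w, evalB w σ = evalB w τ) :
    CPC [σ] τ := fun w hw => h w ▸ hw σ (List.mem_singleton_self σ)

section ConsistentInterpretation

variable {A : Type*} {z o : A} {meet join himp : A → A → A}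

theorem meet_evalA_eq_of_CPC (hrefl : ∀ a : A, meet a a = a)
    (hcons : ∀ (L : List Form) (φ : Form), CPC L φ →
      ∀ (v : ℕ → A) (c : A),
        (∀ ψ ∈ L, meet c (evalA z o meet join himp v ψ) = c) →
        meet c (evalA z o meet join himp v φ) = c)
    {σ τ : Form} (h : CPC [σ] τ) (v : ℕ → A) :
    meet (evalA z o meet join himp v σ) (evalA z o meet join himp v τ) =
      evalA z o meet join himp v σ :=
  hcons [σ] τ h v _ (by simpa using hrefl _)

theorem evalA_eq_of_evalB_eq (hrefl : ∀ a : A, meet a a = a)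
    (hantisymm : ∀ a b : A, meet a b = a → meet b a = b → a = b)
    (hcons : ∀ (L : List Form) (φ : Form), CPC L φ →
      ∀ (v : ℕ → A) (c : A),
        (∀ ψ ∈ L, meet c (evalA z o meet join himp v ψ) = c) →
        meet c (evalA z o meet join himp v φ) = c)
    {σ τ : Form} (h : ∀ w, evalB w σ = evalB w τ) (v : ℕ → A) :
    evalA z o meet join himp v σ = evalA z o meet join himp v τ :=
  hantisymm _ _ (meet_evalA_eq_of_CPC hrefl hcons (CPC_singleton_of_evalB_eq h) v)
    (meet_evalA_eq_of_CPC hrefl hcons (CPC_singleton_of_evalB_eq fun w => (h w).symm) v)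

end ConsistentInterpretation

open Form in
theorem algebraic_carnap_CPC_general {A : Type*} (z o : A) (meet join himp : A → A → A)
    -- a ≤ b ⟺ a ∧ b = a is a partial order with greatest element 1
    (hrefl : ∀ a : A, meet a a = a)
    (hantisymm : ∀ a b : A, meet a b = a → meet b a = b → a = b)
    (htop : ∀ a : A, meet a o = a)
    -- consistency with ⊢_CPC
    (hcons : ∀ (L : List Form) (φ : Form), CPC L φ →
      ∀ (v : ℕ → A) (c : A),
        (∀ ψ ∈ L, meet c (evalA z o meet join himp v ψ) = c) →
        meet c (evalA z o meet join himp v φ) = c) :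
    -- conclusion: (A, z, o, meet, join, ') with a' = himp a z is a Boolean
    -- algebra, i.e. a bounded distributive lattice with complementation
    (∀ a b : A, meet a b = meet b a) ∧
    (∀ a b c : A, meet a (meet b c) = meet (meet a b) c) ∧
    (∀ a b : A, join a b = join b a) ∧
    (∀ a b c : A, join a (join b c) = join (join a b) c) ∧
    (∀ a b : A, meet a (join a b) = a) ∧
    (∀ a b : A, join a (meet a b) = a) ∧
    (∀ a : A, meet a o = a) ∧
    (∀ a : A, join a z = a) ∧
    (∀ a b c : A, meet a (join b c) = join (meet a b) (meet a c)) ∧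
    (∀ a : A, meet a (himp a z) = z) ∧
    (∀ a : A, join a (himp a z) = o) := by
  have eqv (σ τ : Form) (v : ℕ → A) (h : ∀ w, evalB w σ = evalB w τ := by
      intro w; simp only [evalB]; cases w 0 <;> cases w 1 <;> cases w 2 <;> rfl) :=
    evalA_eq_of_evalB_eq hrefl hantisymm hcons h v
  let val (a b c : A) : ℕ → A := fun n => if n = 0 then a else if n = 1 then b else c
  refine ⟨fun a b => ?_, fun a b c => ?_, fun a b => ?_, fun a b c => ?_, fun a b => ?_,
    fun a b => ?_, htop, fun a => ?_, fun a b c => ?_, fun a => ?_, fun a => ?_⟩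
  · simpa [evalA, val] using eqv (and (atom 0) (atom 1)) (and (atom 1) (atom 0)) (val a b b)
  · simpa [evalA, val] using
      eqv (and (atom 0) (and (atom 1) (atom 2))) (and (and (atom 0) (atom 1)) (atom 2)) (val a b c)
  · simpa [evalA, val] using eqv (or (atom 0) (atom 1)) (or (atom 1) (atom 0)) (val a b b)
  · simpa [evalA, val] using
      eqv (or (atom 0) (or (atom 1) (atom 2))) (or (or (atom 0) (atom 1)) (atom 2)) (val a b c)
  · simpa [evalA, val] using eqv (and (atom 0) (or (atom 0) (atom 1))) (atom 0) (val a b b)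
  · simpa [evalA, val] using eqv (or (atom 0) (and (atom 0) (atom 1))) (atom 0) (val a b b)
  · simpa [evalA, val] using eqv (or (atom 0) bot) (atom 0) (val a a a)
  · simpa [evalA, val] using
      eqv (and (atom 0) (or (atom 1) (atom 2)))
        (or (and (atom 0) (atom 1)) (and (atom 0) (atom 2))) (val a b c)
  · simpa [evalA, val] using eqv (and (atom 0) (imp (atom 0) bot)) bot (val a a a)
  · simpa [evalA, val] using eqv (or (atom 0) (imp (atom 0) bot)) top (val a a a)

/-- Algebraic Carnap categoricity of CPC: an algebraic interpretation consistent
with ⊢_CPC is a Boolean algebra, with complement a' = a → 0. -/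
theorem algebraic_carnap_CPC {A : Type*} (z o : A) (meet join himp : A → A → A)
    -- a ≤ b ⟺ a ∧ b = a is a partial order with greatest element 1
    (hrefl : ∀ a : A, meet a a = a)
    (hantisymm : ∀ a b : A, meet a b = a → meet b a = b → a = b)
    (htrans : ∀ a b c : A, meet a b = a → meet b c = b → meet a c = a)
    (htop : ∀ a : A, meet a o = a)
    -- consistency with ⊢_CPC
    (hcons : ∀ (L : List Form) (φ : Form), CPC L φ →
      ∀ (v : ℕ → A) (c : A),
        (∀ ψ ∈ L, meet c (evalA z o meet join himp v ψ) = c) →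
        meet c (evalA z o meet join himp v φ) = c) :
    -- conclusion: (A, z, o, meet, join, ') with a' = himp a z is a Boolean
    -- algebra, i.e. a bounded distributive lattice with complementation
    (∀ a b : A, meet a b = meet b a) ∧
    (∀ a b c : A, meet a (meet b c) = meet (meet a b) c) ∧
    (∀ a b : A, join a b = join b a) ∧
    (∀ a b c : A, join a (join b c) = join (join a b) c) ∧
    (∀ a b : A, meet a (join a b) = a) ∧
    (∀ a b : A, join a (meet a b) = a) ∧
    (∀ a : A, meet a o = a) ∧
    (∀ a : A, join a z = a) ∧
    (∀ a b c : A, meet a (join b c) = join (meet a b) (meet a c)) ∧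
    (∀ a : A, meet a (himp a z) = z) ∧
    (∀ a : A, join a (himp a z) = o) :=
  algebraic_carnap_CPC_general z o meet join himp hrefl hantisymm htop hcons
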